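/- arXiv:0801.4114 — 2 statements merged into one kernel-verified Lean document; each statement's English description precedes it below -/
import Mathlib

section
/- Let Q be a reduced word for v with last letter r_α, and Q' be Q minus its last letter. If w r_α < w and w ≰ v r_α, then every subword of Q whose product is w must use the last letter of Q, and removing that last letter yields a subword of Q' with product w r_α. -/
variable {B W : Type*} [DecidableEq B] [Group W] {M : CoxeterMatrix B} (cs : CoxeterSystem M W)

/-- The Bruhat order on a Coxeter group, via the subword property:
`u ≤ v` iff every reduced word for `v` contains a subword that is a reduced word for `u`. -/
def BruhatLe (u v : W) : Prop :=
  ∀ Q : List B, cs.IsReduced Q → cs.wordProd Q = v →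
    ∃ P : List B, P.Sublist Q ∧ cs.IsReduced P ∧ cs.wordProd P = u

/-- The Demazure product of a word in the simple reflections: multiply the letters in
order, omitting any letter that would decrease the length. -/
noncomputable def Dem (Q : List B) : W :=
  Q.foldl (fun w b => if cs.length w < cs.length (w * cs.simple b) then w * cs.simple b else w) 1

/-- The subword of `Q` obtained by deleting the letters at the positions in `F`
(positions are `0`-indexed); this is the complementary subword `Q ∖ F`. -/
def dmask (Q : List B) (F : Finset ℕ) : List B :=
  (Q.zipIdx.filter fun p => p.2 ∉ F).map Prod.fst

/-- The subword of `Q` consisting of the letters at the positions in `F` (in order). -/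
def smask (Q : List B) (F : Finset ℕ) : List B :=
  (Q.zipIdx.filter fun p => p.2 ∈ F).map Prod.fst

/-- `F` is a face of the subword complex `Δ(Q,w)`: `F` is a set of positions of `Q` such
that the complementary subword `Q ∖ F` contains a reduced word for `w`. -/
def IsFace (Q : List B) (w : W) (F : Finset ℕ) : Prop :=
  F ⊆ Finset.range Q.length ∧
    ∃ P : List B, P.Sublist (dmask Q F) ∧ cs.IsReduced P ∧ cs.wordProd P = w

/-- `F` is a facet (maximal face) of the subword complex `Δ(Q,w)`. -/
def IsFacet (Q : List B) (w : W) (F : Finset ℕ) : Prop :=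
  IsFace cs Q w F ∧ ∀ F' : Finset ℕ, IsFace cs Q w F' → F ⊆ F' → F' = F

/-!
A subword of the reduced word `Q'` has product below `π Q' = v r_α` in the Bruhat order (the
subword property), so a subword of `Q` with product `w ≰ v r_α` must use the last letter, and
deleting that letter leaves a subword of `Q'` with product `w r_α`.

The subword property is proved through the chain description of the Bruhat order. Strong
exchange turns a chain `u ≤ v` into a reduced subword for `u` of every reduced word for `v`;
conversely, by induction along a reduced word, the lifting property turns reduced subwords into
chains. Strong exchange comes from the reflection cocycle `W →* (W → ZMod 2) ⋊ W`,
`s ↦ (δₛ, s)`, whose first component at `t` is the parity of the number of occurrences of `t` in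
the left inversion sequence of any word.
-/

lemma Finset.sum_range_two_mul {M : Type*} [AddCommMonoid M] (F : ℕ → M) (m : ℕ) :
    ∑ k ∈ range (2 * m), F k = ∑ r ∈ range m, (F (2 * r) + F (2 * r + 1)) := by
  induction m with
  | zero => simp
  | succ m ih => rw [Nat.mul_succ, sum_range_succ, sum_range_succ, sum_range_succ, ih, add_assoc]

/-- The semidirect product `(G → ZMod 2) ⋊ G`, where `G` acts on functions by conjugating
their argument. -/
@[ext]
structure ConjSemidirect (G : Type*) where
  left : G → ZMod 2
  right : G

namespace ConjSemidirect

variable {G : Type*}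

def of [DecidableEq G] (t : G) : ConjSemidirect G := ⟨Pi.single t 1, t⟩

@[simp] lemma of_left [DecidableEq G] (t : G) : (of t).left = Pi.single t 1 := rfl

@[simp] lemma of_right [DecidableEq G] (t : G) : (of t).right = t := rfl

variable [Group G]

instance : Group (ConjSemidirect G) where
  mul a b := ⟨a.left + fun x => b.left (a.right⁻¹ * x * a.right), a.right * b.right⟩
  one := ⟨0, 1⟩
  inv a := ⟨fun x => a.left (a.right * x * a.right⁻¹), a.right⁻¹⟩
  mul_assoc a b c := by
    ext x
    · change _ + _ + c.left ((a.right * b.right)⁻¹ * x * (a.right * b.right)) =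
        _ + (_ + c.left (b.right⁻¹ * (a.right⁻¹ * x * a.right) * b.right))
      simp only [mul_inv_rev, mul_assoc, add_assoc]
    · exact mul_assoc _ _ _
  one_mul a := by
    ext x
    · change 0 + a.left (1⁻¹ * x * 1) = _
      simp
    · exact one_mul _
  mul_one a := by
    ext x
    · exact add_zero _
    · exact mul_one _
  inv_mul_cancel a := by
    ext x
    · change a.left _ + a.left _ = 0
      rw [inv_inv, CharTwo.add_self_eq_zero]
    · exact inv_mul_cancel _

@[simp] lemma mul_left (a b : ConjSemidirect G) (x : G) :
    (a * b).left x = a.left x + b.left (a.right⁻¹ * x * a.right) := rfl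

@[simp] lemma one_left : (1 : ConjSemidirect G).left = 0 := rfl

@[simp] lemma one_right : (1 : ConjSemidirect G).right = 1 := rfl

def rightHom : ConjSemidirect G →* G where
  toFun := right
  map_one' := rfl
  map_mul' _ _ := rfl

@[simp] lemma rightHom_apply (a : ConjSemidirect G) : rightHom a = a.right := rfl

lemma pow_right (a : ConjSemidirect G) (k : ℕ) : (a ^ k).right = a.right ^ k :=
  map_pow rightHom a k

lemma pow_left (a : ConjSemidirect G) (k : ℕ) (x : G) :
    (a ^ k).left x = ∑ r ∈ Finset.range k, a.left ((a.right ^ r)⁻¹ * x * a.right ^ r) := by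
  induction k with
  | zero => simp
  | succ k ih => rw [pow_succ, mul_left, ih, Finset.sum_range_succ, pow_right]

variable [DecidableEq G]

lemma single_conj (u t x : G) :
    (Pi.single t 1 : G → ZMod 2) (u⁻¹ * x * u) = (Pi.single (u * t * u⁻¹) 1 : G → ZMod 2) x := by
  simp only [Pi.single_apply]
  exact if_congr ⟨fun h => by rw [← h]; group, fun h => by rw [h]; group⟩ rfl rfl

lemma of_mul_of_pow_eq_one {s s' : G} (hs : s * s = 1) (hs' : s' * s' = 1) {m : ℕ}
    (hm : (s * s') ^ m = 1) : (of s * of s') ^ m = 1 := by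
  -- with `c = s * s'`, the left component at `x` counts the `k < 2 * m` with `x = c ^ k * s`;
  -- this condition has period `m` in `k`, so every solution is counted twice
  set c := s * s'
  have hs_inv : s⁻¹ = s := inv_eq_of_mul_eq_one_right hs
  have hc_inv : c⁻¹ = s' * s := by
    rw [mul_inv_rev, hs_inv, inv_eq_of_mul_eq_one_right hs']
  have h_swap (r : ℕ) : s * (c ^ r)⁻¹ = c ^ r * s := by
    have : s * c⁻¹ * s⁻¹ = c := by rw [hc_inv, hs_inv, ← mul_assoc, mul_assoc _ s, hs, mul_one]
    calc s * (c ^ r)⁻¹ = (s * c⁻¹ * s⁻¹) ^ r * s := by rw [conj_pow, inv_pow]; group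
      _ = c ^ r * s := by rw [this]
  have h_even (r : ℕ) : c ^ r * s * (c ^ r)⁻¹ = c ^ (2 * r) * s := by
    rw [mul_assoc, h_swap, ← mul_assoc, ← pow_add, two_mul]
  have h_odd (r : ℕ) : c ^ r * (c * s) * (c ^ r)⁻¹ = c ^ (2 * r + 1) * s := by
    rw [mul_assoc, mul_assoc, h_swap, ← mul_assoc, ← mul_assoc, ← pow_succ, ← pow_add,
      add_right_comm, two_mul]
  have h_right : (of s * of s').right = c := rfl
  have h_left (y : G) : (of s * of s').left y =
      (Pi.single s 1 : G → ZMod 2) y + (Pi.single (c * s) 1 : G → ZMod 2) y := by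
    rw [mul_left, of_left, of_right, of_left, single_conj, hs_inv]
  ext x
  · let F (k : ℕ) : ZMod 2 := (Pi.single (c ^ k * s) 1 : G → ZMod 2) x
    have hF (k : ℕ) : F (m + k) = F k := by simp only [F, pow_add, hm, one_mul]
    calc ((of s * of s') ^ m).left x = ∑ r ∈ Finset.range m, (F (2 * r) + F (2 * r + 1)) := by
          simp only [pow_left, h_right, h_left, single_conj, h_even, h_odd, F]
      _ = ∑ k ∈ Finset.range m, (F k + F k) := by
          rw [← Finset.sum_range_two_mul, two_mul, Finset.sum_range_add, ← Finset.sum_add_distrib]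
          simp only [hF]
      _ = 0 := by simp only [CharTwo.add_self_eq_zero, Finset.sum_const_zero]
      _ = (1 : ConjSemidirect G).left x := rfl
  · rw [pow_right, h_right, hm, one_right]

end ConjSemidirect

namespace CoxeterSystem

section
omit [DecidableEq B]

open scoped Classical in
noncomputable def reflectionCocycle : W →* ConjSemidirect W :=
  cs.lift ⟨fun i => .of (cs.simple i), fun i j =>
    ConjSemidirect.of_mul_of_pow_eq_one (cs.simple_mul_simple_self i)
      (cs.simple_mul_simple_self j) (cs.simple_mul_simple_pow i j)⟩

open scoped Classical in
lemma reflectionCocycle_simple (i : B) :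
    cs.reflectionCocycle (cs.simple i) = .of (cs.simple i) :=
  cs.lift_apply_simple _ i

lemma reflectionCocycle_right (w : W) : (cs.reflectionCocycle w).right = w := by
  have : ConjSemidirect.rightHom.comp cs.reflectionCocycle = MonoidHom.id W :=
    cs.ext_simple fun i => by simp [reflectionCocycle_simple]
  exact DFunLike.congr_fun this w

noncomputable def inversionParity (w t : W) : ZMod 2 := (cs.reflectionCocycle w).left t

lemma inversionParity_mul (u v t : W) :
    cs.inversionParity (u * v) t = cs.inversionParity u t + cs.inversionParity v (u⁻¹ * t * u) := by
  simp [inversionParity, reflectionCocycle_right]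

lemma inversionParity_one (t : W) : cs.inversionParity 1 t = 0 := by
  simp [inversionParity]

open scoped Classical in
theorem inversionParity_wordProd (ω : List B) (t : W) :
    cs.inversionParity (cs.wordProd ω) t = ((cs.leftInvSeq ω).count t : ZMod 2) := by
  induction ω generalizing t with
  | nil => simp [inversionParity_one]
  | cons i ω ih =>
    have h_conj : (List.map (MulAut.conj (cs.simple i)) (cs.leftInvSeq ω)).count t =
        (cs.leftInvSeq ω).count ((cs.simple i)⁻¹ * t * cs.simple i) := by
      conv_lhs => rw [show t = MulAut.conj (cs.simple i) ((cs.simple i)⁻¹ * t * cs.simple i) by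
        simp [mul_assoc]]
      exact List.count_map_of_injective _ _ (MulAut.conj _).injective _
    rw [wordProd_cons, inversionParity_mul, ih, leftInvSeq, List.count_cons, h_conj,
      Nat.cast_add, add_comm]
    simp only [inversionParity, reflectionCocycle_simple, ConjSemidirect.of_left, Pi.single_apply]
    rcases eq_or_ne t (cs.simple i) with rfl | h
    · simp
    · simp [h, Ne.symm h]

lemma inversionParity_simple_self (i : B) : cs.inversionParity (cs.simple i) (cs.simple i) = 1 := by
  simp [inversionParity, reflectionCocycle_simple]

lemma inversionParity_inv (u t : W) :
    cs.inversionParity u⁻¹ (u⁻¹ * t * u) = cs.inversionParity u t := by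
  have h := cs.inversionParity_mul u u⁻¹ t
  rw [mul_inv_cancel, inversionParity_one, eq_comm, CharTwo.add_eq_zero] at h
  exact h.symm

theorem inversionParity_self {t : W} (ht : cs.IsReflection t) : cs.inversionParity t t = 1 := by
  obtain ⟨w, i, rfl⟩ := ht
  have h_conj : w⁻¹ * (w * cs.simple i * w⁻¹) * w = cs.simple i := by group
  have h_conj' : (w * cs.simple i)⁻¹ * (w * cs.simple i * w⁻¹) * (w * cs.simple i) =
      cs.simple i := by group
  rw [inversionParity_mul, h_conj', inversionParity_mul, h_conj, ← cs.inversionParity_inv w,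
    h_conj, inversionParity_simple_self, add_right_comm, CharTwo.add_self_eq_zero, zero_add]

theorem mem_leftInvSeq_of_inversionParity_ne_zero {ω : List B} {t : W}
    (h : cs.inversionParity (cs.wordProd ω) t ≠ 0) : t ∈ cs.leftInvSeq ω := by
  classical
  rw [inversionParity_wordProd] at h
  exact List.count_pos_iff.mp (Nat.pos_of_ne_zero fun h' => h (by rw [h', Nat.cast_zero]))

theorem inversionParity_ne_zero_iff {w t : W} :
    cs.inversionParity w t ≠ 0 ↔ cs.IsLeftInversion w t := by
  have h_inv (w : W) (h : cs.inversionParity w t ≠ 0) : cs.IsLeftInversion w t := by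
    obtain ⟨ω, hω, rfl⟩ := cs.exists_isReduced w
    exact cs.isLeftInversion_of_mem_leftInvSeq hω (cs.mem_leftInvSeq_of_inversionParity_ne_zero h)
  refine ⟨h_inv w, fun ⟨ht, hlt⟩ h0 => ?_⟩
  have : cs.inversionParity (t * w) t ≠ 0 := by
    rw [inversionParity_mul, inversionParity_self cs ht, ht.inv, ht.mul_self, one_mul, h0]
    exact one_ne_zero
  have := (h_inv _ this).2
  rw [← mul_assoc, ht.mul_self, one_mul] at this
  omega

theorem strong_exchange_left {ω : List B} {t : W} (h : cs.IsLeftInversion (cs.wordProd ω) t) :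
    ∃ ρ : List B, ρ.Sublist ω ∧ ρ.length + 1 = ω.length ∧ cs.wordProd ρ = t * cs.wordProd ω := by
  obtain ⟨j, hj, hjt⟩ := List.getElem_of_mem
    (cs.mem_leftInvSeq_of_inversionParity_ne_zero (cs.inversionParity_ne_zero_iff.mpr h))
  rw [length_leftInvSeq] at hj
  refine ⟨ω.eraseIdx j, List.eraseIdx_sublist ω j, List.length_eraseIdx_add_one hj, ?_⟩
  rw [← getD_leftInvSeq_mul_wordProd, List.getD_eq_getElem _ _ (by simpa using hj), hjt]

theorem strong_exchange_right {ω : List B} {t : W} (h : cs.IsRightInversion (cs.wordProd ω) t) :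
    ∃ ρ : List B, ρ.Sublist ω ∧ ρ.length + 1 = ω.length ∧ cs.wordProd ρ = cs.wordProd ω * t := by
  rw [← isLeftInversion_inv_iff, ← wordProd_reverse] at h
  obtain ⟨ρ, hρω, hlen, hprod⟩ := cs.strong_exchange_left h
  refine ⟨ρ.reverse, List.sublist_reverse_iff.mp hρω, by simpa using hlen, ?_⟩
  rw [wordProd_reverse, hprod, wordProd_reverse, mul_inv_rev, inv_inv, h.1.inv]

theorem exists_reduced_sublist (ω : List B) :
    ∃ ρ : List B, ρ.Sublist ω ∧ cs.IsReduced ρ ∧ cs.wordProd ρ = cs.wordProd ω := by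
  induction ω with
  | nil => exact ⟨[], List.Sublist.slnil, by simp [IsReduced], rfl⟩
  | cons i ω ih =>
    obtain ⟨ρ, hρω, hρ, hprod⟩ := ih
    rcases cs.length_simple_mul (cs.wordProd ρ) i with hlen | hlen
    · refine ⟨i :: ρ, hρω.cons_cons i, ?_, by rw [wordProd_cons, wordProd_cons, hprod]⟩
      rw [IsReduced, wordProd_cons, hlen, hρ.eq, List.length_cons]
    · obtain ⟨ρ', hρ'ρ, hlen', hprod'⟩ :=
        cs.strong_exchange_left (ω := ρ) ⟨cs.isReflection_simple i, by omega⟩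
      refine ⟨ρ', (hρ'ρ.trans hρω).cons i, ?_, by rw [hprod', hprod, wordProd_cons]⟩
      rw [IsReduced, hprod']
      have := hρ.eq
      omega

def IsReflectionStep (u v : W) : Prop :=
  ∃ t, cs.IsReflection t ∧ v = u * t ∧ cs.length u < cs.length v

/-- The Bruhat order in its chain form: the reflexive-transitive closure of `u < u * t`. -/
def ChainLe : W → W → Prop := Relation.ReflTransGen cs.IsReflectionStep

lemma chainLe_mul_of_length_lt {u t : W} (ht : cs.IsReflection t)
    (h : cs.length u < cs.length (u * t)) : cs.ChainLe u (u * t) :=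
  .single ⟨t, ht, rfl, h⟩

lemma chainLe_simple_mul {u : W} {i : B} (h : cs.length u < cs.length (cs.simple i * u)) :
    cs.ChainLe u (cs.simple i * u) := by
  have h_eq : cs.simple i * u = u * (u⁻¹ * cs.simple i * u) := by group
  rw [h_eq] at h ⊢
  exact cs.chainLe_mul_of_length_lt ⟨u⁻¹, i, by group⟩ h

theorem ChainLe.bruhatLe {u v : W} (h : cs.ChainLe u v) : BruhatLe cs u v := by
  induction h with
  | refl => exact fun ω hω hv => ⟨ω, List.Sublist.refl ω, hω, hv⟩
  | tail _ h_step ih =>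
    obtain ⟨t, ht, rfl, hlt⟩ := h_step
    intro ω hω hv
    obtain ⟨ρ, hρω, -, hρ⟩ := cs.strong_exchange_right (ω := ω)
      ⟨ht, by rwa [hv, mul_assoc, ht.mul_self, mul_one]⟩
    obtain ⟨ρ', hρ'ρ, hρ', hprod⟩ := cs.exists_reduced_sublist ρ
    obtain ⟨P, hPρ', hP, hPu⟩ := ih ρ' hρ' (by rw [hprod, hρ, hv, mul_assoc, ht.mul_self, mul_one])
    exact ⟨P, hPρ'.trans (hρ'ρ.trans hρω), hP, hPu⟩

theorem eq_simple_mul_or_length_simple_mul_add_two_le {v t : W} {i : B}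
    (hi : cs.IsLeftDescent v i) (ht : cs.IsRightInversion v t) :
    v * t = cs.simple i * v ∨ cs.length (cs.simple i * (v * t)) + 2 ≤ cs.length v := by
  obtain ⟨ω, hω, hω_prod⟩ := cs.exists_isReduced (cs.simple i * v)
  have hv : cs.wordProd (i :: ω) = v := by
    rw [wordProd_cons, ← hω_prod, simple_mul_simple_cancel_left]
  have hv_len : cs.length v = ω.length + 1 := by
    have := cs.length_simple_mul v i
    rw [IsLeftDescent, hω_prod, hω.eq] at hi
    rw [hω_prod, hω.eq] at this
    omega
  obtain ⟨ρ, hρ, hρ_len, hρ_prod⟩ := cs.strong_exchange_right (ω := i :: ω) (by rwa [hv])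
  rw [hv] at hρ_prod
  cases hρ with
  | cons _ hρω =>
    left
    rw [← hρ_prod, hρω.eq_of_length (by simpa using hρ_len), hω_prod]
  | cons_cons _ hlω =>
    right
    rename_i l
    rw [← hρ_prod, wordProd_cons, simple_mul_simple_cancel_left]
    have := cs.length_wordProd_le l
    simp only [List.length_cons] at hρ_len
    omega

theorem IsReflectionStep.simple_mul_chainLe_or {u v : W} (h : cs.IsReflectionStep u v) (i : B) :
    cs.ChainLe (cs.simple i * u) v ∨ cs.ChainLe (cs.simple i * u) (cs.simple i * v) := by
  obtain ⟨t, ht, rfl, hlt⟩ := h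
  have h_cancel : u * t * t = u := by rw [mul_assoc, ht.mul_self, mul_one]
  have h_step (hlt' : cs.length (cs.simple i * u) < cs.length (cs.simple i * (u * t))) :
      cs.ChainLe (cs.simple i * u) (cs.simple i * (u * t)) := by
    rw [← mul_assoc] at hlt' ⊢
    exact cs.chainLe_mul_of_length_lt ht hlt'
  rcases cs.length_simple_mul u i with hu | hu
  · rcases cs.length_simple_mul (u * t) i with hv | hv
    · exact .inr (h_step (by omega))
    rcases cs.eq_simple_mul_or_length_simple_mul_add_two_le (v := u * t) (i := i)
      (by rw [IsLeftDescent]; omega) ⟨ht, by rwa [h_cancel]⟩ with heq | hle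
    · left
      rw [h_cancel] at heq
      rw [← inv_simple, inv_mul_eq_of_eq_mul heq]
      exact .refl
    · rw [h_cancel] at hle
      exact .inr (h_step (by omega))
  · left
    have h_desc := cs.chainLe_simple_mul (u := cs.simple i * u) (i := i)
      (by rw [simple_mul_simple_cancel_left]; omega)
    rw [simple_mul_simple_cancel_left] at h_desc
    exact h_desc.tail ⟨t, ht, rfl, hlt⟩

theorem ChainLe.simple_mul_chainLe_or {u v : W} (h : cs.ChainLe u v) (i : B) :
    cs.ChainLe (cs.simple i * u) v ∨ cs.ChainLe (cs.simple i * u) (cs.simple i * v) := by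
  induction h with
  | refl => exact .inr .refl
  | tail _ h_step ih =>
    rcases ih with h_le | h_le
    · exact .inl (h_le.tail h_step)
    · exact (h_step.simple_mul_chainLe_or cs i).imp h_le.trans h_le.trans

theorem chainLe_of_sublist {P Q : List B} (hQ : cs.IsReduced Q) (hPQ : P.Sublist Q)
    (hP : cs.IsReduced P) : cs.ChainLe (cs.wordProd P) (cs.wordProd Q) := by
  induction Q generalizing P with
  | nil => rw [List.sublist_nil.mp hPQ]; exact .refl
  | cons i Q ih =>
    have hQ' : cs.IsReduced Q := by simpa using hQ.drop 1
    have h_le : cs.ChainLe (cs.wordProd Q) (cs.simple i * cs.wordProd Q) := by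
      apply chainLe_simple_mul
      rw [← wordProd_cons, hQ.eq, hQ'.eq, List.length_cons]
      omega
    rw [wordProd_cons]
    cases hPQ with
    | cons _ hPQ => exact (ih hQ' hPQ hP).trans h_le
    | cons_cons _ hPQ =>
      rw [wordProd_cons]
      rcases (ih hQ' hPQ (by simpa using hP.drop 1)).simple_mul_chainLe_or cs i with h | h
      · exact h.trans h_le
      · exact h

theorem bruhatLe_of_sublist {P Q : List B} (hQ : cs.IsReduced Q) (hPQ : P.Sublist Q) :
    BruhatLe cs (cs.wordProd P) (cs.wordProd Q) := by
  obtain ⟨P', hP'P, hP', hprod⟩ := cs.exists_reduced_sublist P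
  rw [← hprod]
  exact (cs.chainLe_of_sublist hQ (hP'P.trans hPQ) hP').bruhatLe

end

end CoxeterSystem

theorem subword_uses_last (Q' : List B) (a : B) (v w : W)
    (hQ : cs.IsReduced (Q' ++ [a])) (hv : cs.wordProd (Q' ++ [a]) = v)
    (hnle : ¬ BruhatLe cs w (v * cs.simple a)) :
    ∀ P : List B, P.Sublist (Q' ++ [a]) → cs.wordProd P = w →
      ¬ P.Sublist Q' ∧
        ∃ P' : List B, P = P' ++ [a] ∧ P'.Sublist Q' ∧ cs.wordProd P' = w * cs.simple a := by
  intro P hPQ hPw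
  have hQ' : cs.IsReduced Q' := by simpa using hQ.take Q'.length
  have hvQ' : cs.wordProd Q' = v * cs.simple a := by
    rw [← hv, cs.wordProd_append, cs.wordProd_singleton, cs.simple_mul_simple_cancel_right]
  have h_not : ¬ P.Sublist Q' := fun hPQ' => hnle (hPw ▸ hvQ' ▸ cs.bruhatLe_of_sublist hQ' hPQ')
  refine ⟨h_not, ?_⟩
  obtain ⟨X, Y, rfl, hX, hY⟩ := List.sublist_append_iff.mp hPQ
  rcases List.sublist_singleton.mp hY with rfl | rfl
  · exact absurd (by simpa using hX) h_not
  · refine ⟨X, rfl, hX, ?_⟩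
    rw [← hPw, cs.wordProd_append, cs.wordProd_singleton, cs.simple_mul_simple_cancel_right]
end

section
/- Let Q be a reduced word for v with last letter r_α (so v r_α < v), and let Q' be Q minus its last letter. If w r_α > w, then the last position ℓ(v) is a cone point of the subword complex Δ(Q,w): it lies in every facet, and both the deletion and the link of ℓ(v) in Δ(Q,w) equal Δ(Q', w). -/
variable {B W : Type*} [DecidableEq B] [Group W] {M : CoxeterMatrix B} (cs : CoxeterSystem M W)

/-! A reduced word for `w` cannot end in a letter `a` with `w sₐ > w`, so no reduced subword
for `w` of `Q' ++ [a]` uses the last letter. Whether the last position lies in `F` or not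
therefore never affects whether the complement of `F` contains a reduced word for `w`, and
`Δ(Q' ++ [a], w)` is the cone over `Δ(Q', w)` with apex that position. -/

section SubwordComplex

variable {B W : Type*} [Group W] {M : CoxeterMatrix B} (cs : CoxeterSystem M W)

namespace CoxeterSystem

theorem IsReduced.isRightDescent_wordProd_append_singleton {ω : List B} {i : B}
    (hω : cs.IsReduced (ω ++ [i])) : cs.IsRightDescent (cs.wordProd (ω ++ [i])) i := by
  have hdrop : cs.wordProd (ω ++ [i]) * cs.simple i = cs.wordProd ω := by
    rw [cs.wordProd_append, cs.wordProd_singleton, cs.simple_mul_simple_cancel_right]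
  rw [IsRightDescent, hdrop, hω.eq, List.length_append, List.length_singleton]
  exact Nat.lt_succ_of_le (cs.length_wordProd_le ω)

theorem sublist_of_sublist_append_singleton {P L : List B} {i : B} (hP : P.Sublist (L ++ [i]))
    (hred : cs.IsReduced P) (hasc : ¬cs.IsRightDescent (cs.wordProd P) i) : P.Sublist L := by
  obtain ⟨P₁, P₂, rfl, h₁, h₂⟩ := List.sublist_append_iff.mp hP
  rcases List.sublist_singleton.mp h₂ with rfl | rfl
  · simpa using h₁
  · exact absurd hred.isRightDescent_wordProd_append_singleton hasc

end CoxeterSystem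

variable {Q : List B} {a : B} {w : W} {F : Finset ℕ}

lemma dmask_append_singleton_of_mem (h : Q.length ∈ F) : dmask (Q ++ [a]) F = dmask Q F := by
  simp only [dmask, List.zipIdx_append, List.zipIdx_singleton, List.filter_append,
    List.map_append]
  simp [h]

lemma dmask_append_singleton_of_notMem (h : Q.length ∉ F) :
    dmask (Q ++ [a]) F = dmask Q F ++ [a] := by
  simp only [dmask, List.zipIdx_append, List.zipIdx_singleton, List.filter_append,
    List.map_append]
  simp [h]

lemma dmask_insert_length (Q : List B) (F : Finset ℕ) :
    dmask Q (insert Q.length F) = dmask Q F := by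
  unfold dmask
  congr 1
  refine List.filter_congr fun p hp => ?_
  have hne : p.2 ≠ Q.length := (List.snd_lt_of_mem_zipIdx hp).ne
  simp [hne]

lemma subset_range_length_append_singleton_iff (h : Q.length ∉ F) :
    F ⊆ Finset.range (Q ++ [a]).length ↔ F ⊆ Finset.range Q.length := by
  rw [List.length_append, List.length_singleton, Finset.range_add_one,
    Finset.subset_insert_iff_of_notMem h]

lemma IsFace.length_notMem (hF : IsFace cs Q w F) : Q.length ∉ F :=
  fun h => Finset.notMem_range_self (hF.1 h)

lemma isFace_append_singleton_and_notMem_iff (hasc : ¬cs.IsRightDescent w a) :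
    IsFace cs (Q ++ [a]) w F ∧ Q.length ∉ F ↔ IsFace cs Q w F := by
  constructor
  · rintro ⟨⟨hsub, P, hPs, hPred, rfl⟩, hF⟩
    rw [dmask_append_singleton_of_notMem hF] at hPs
    exact ⟨(subset_range_length_append_singleton_iff hF).mp hsub, P,
      cs.sublist_of_sublist_append_singleton hPs hPred hasc, hPred, rfl⟩
  · intro hface
    have hF := hface.length_notMem cs
    obtain ⟨hsub, P, hPs, hPred, hPw⟩ := hface
    refine ⟨⟨(subset_range_length_append_singleton_iff hF).mpr hsub, P, ?_, hPred, hPw⟩, hF⟩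
    rw [dmask_append_singleton_of_notMem hF]
    exact hPs.trans (List.sublist_append_left _ _)

lemma isFace_append_singleton_insert_iff (hF : Q.length ∉ F) :
    IsFace cs (Q ++ [a]) w (insert Q.length F) ↔ IsFace cs Q w F := by
  rw [IsFace, IsFace, dmask_append_singleton_of_mem (Finset.mem_insert_self _ F),
    dmask_insert_length, Finset.insert_subset_iff,
    subset_range_length_append_singleton_iff hF]
  simp

lemma mem_of_isFacet (hF : IsFacet cs Q w F) {i : ℕ}
    (hcone : ∀ G, IsFace cs Q w G → i ∉ G → IsFace cs Q w (insert i G)) : i ∈ F := by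
  by_contra hi
  exact hi (hF.2 _ (hcone F hF.1 hi) (Finset.subset_insert i F) ▸ Finset.mem_insert_self i F)

end SubwordComplex

theorem cone_point_of_ascent (Q' : List B) (a : B) (w : W)
    (hasc : cs.length w < cs.length (w * cs.simple a)) :
    (∀ F : Finset ℕ, IsFacet cs (Q' ++ [a]) w F → Q'.length ∈ F) ∧
    (∀ F : Finset ℕ, (IsFace cs (Q' ++ [a]) w F ∧ Q'.length ∉ F) ↔ IsFace cs Q' w F) ∧
    (∀ F : Finset ℕ,
      (Q'.length ∉ F ∧ IsFace cs (Q' ++ [a]) w (insert Q'.length F)) ↔ IsFace cs Q' w F) := by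
  have hw : ¬cs.IsRightDescent w a := hasc.not_gt
  have hlink (F : Finset ℕ) :
      (Q'.length ∉ F ∧ IsFace cs (Q' ++ [a]) w (insert Q'.length F)) ↔ IsFace cs Q' w F :=
    ⟨fun ⟨hF, hface⟩ => (isFace_append_singleton_insert_iff cs hF).mp hface,
      fun hface => ⟨hface.length_notMem cs,
        (isFace_append_singleton_insert_iff cs (hface.length_notMem cs)).mpr hface⟩⟩
  refine ⟨fun F hF => mem_of_isFacet cs hF fun G hG hn => ?_,
    fun F => isFace_append_singleton_and_notMem_iff cs hw, hlink⟩
  exact ((hlink G).mpr ((isFace_append_singleton_and_notMem_iff cs hw).mp ⟨hG, hn⟩)).2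
end
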